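/- Let 𝒯 be a triangulated category, G a split-generator of 𝒯, and F an exact endofunctor of 𝒯. Fix t ∈ ℝ with h_F(t) ≠ −∞ and assume ĥ_F(t) = lim_{n→∞} (log δ_{G, F^n(G)}(t) − n·h_F(t))/log(n) (i.e. the limsup defining the polynomial entropy is a genuine limit). Then for every integer m > 0 one has ĥ_{F^m}(t) = ĥ_F(t), and moreover ĥ_{F^m}(t) = lim_{n→∞} (log δ_{G, F^{nm}(G)}(t) − n·h_{F^m}(t))/log(n). -/

import Mathlib

/-!
**Statement 12.** Let `𝒯` be a triangulated category, `G` a split-generator of `𝒯`, and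
`F` an exact endofunctor of `𝒯`.  Fix `t ∈ ℝ` with `h_F(t) ≠ −∞` (i.e. the entropy
defining sequence converges to a real number `L`) and assume the `limsup` defining the
polynomial entropy `ĥ_F(t)` is a genuine limit with value `p ∈ EReal`.  Then for every
integer `m > 0` one has `ĥ_{F^m}(t) = ĥ_F(t)` — the `limsup` defining `ĥ_{F^m}(t)`
(computed with `h_{F^m}(t) = m·h_F(t)`) equals `p` — and moreover
`ĥ_{F^m}(t) = lim_{n→∞} (log δ_{G, F^{nm}(G)}(t) − n·h_{F^m}(t))/log n`.
-/

open CategoryTheory Limits Pretriangulated Filter Topology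
open scoped ENNReal

noncomputable section

section Complexity

variable {C : Type*} [Category C] [HasZeroObject C] [Preadditive C]
  [HasShift C ℤ] [∀ n : ℤ, (shiftFunctor C n).Additive] [Pretriangulated C]

/-- The `n`-th iterate of an endofunctor. -/
def fpow (F : C ⥤ C) : ℕ → C ⥤ C
  | 0 => 𝟭 C
  | n + 1 => fpow F n ⋙ F

/-- The complexity `δ_{X,Y}(t)` of Dimitrov–Haiden–Katzarkov–Kontsevich:
the infimum, over all towers of exact triangles
`0 = A₀ → A₁ → ⋯ → A_k ≅ Y ⊕ B` whose cones are `Σ^{nᵢ} X`, of `∑ᵢ exp (nᵢ t)`;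
it takes values in `ℝ≥0 ∪ {∞} = ℝ≥0∞` (the infimum of the empty set being `∞`). -/
def complexity (X Y : C) (t : ℝ) : ℝ≥0∞ :=
  sInf { s : ℝ≥0∞ | ∃ (k : ℕ) (A : ℕ → C) (ns : ℕ → ℤ) (B : C),
    IsZero (A 0) ∧
    Nonempty (A k ≅ Y ⊞ B) ∧
    (∀ i < k, ∃ (f : A i ⟶ A (i + 1))
      (g : A (i + 1) ⟶ (shiftFunctor C (ns i)).obj X)
      (h : (shiftFunctor C (ns i)).obj X ⟶ (shiftFunctor C (1 : ℤ)).obj (A i)),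
      Triangle.mk f g h ∈ distTriang C) ∧
    s = ∑ i ∈ Finset.range k, ENNReal.ofReal (Real.exp ((ns i : ℝ) * t)) }

/-- `log δ_{X,Y}(t)` (with junk value if `δ_{X,Y}(t) = ∞`). -/
def logDelta (X Y : C) (t : ℝ) : ℝ := Real.log (complexity X Y t).toReal

/-- The sequence `n ↦ (1/n) · log δ_{G, Fⁿ G}(t)`, whose limit is the entropy `h_F(t)`. -/
def entropySeq (F : C ⥤ C) (G : C) (t : ℝ) (n : ℕ) : ℝ :=
  (1 / (n : ℝ)) * logDelta G ((fpow F n).obj G) t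

/-- The sequence `n ↦ (log δ_{G, Fⁿ G}(t) − n·h) / log n`, whose `limsup` is the
polynomial entropy `ĥ_F(t)` (for `h = h_F(t)`). -/
def polySeq (F : C ⥤ C) (G : C) (t h : ℝ) (n : ℕ) : ℝ :=
  (logDelta G ((fpow F n).obj G) t - (n : ℝ) * h) / Real.log (n : ℝ)

/-- Membership in the smallest thick (triangulated, closed under direct summands)
subcategory containing `G`. -/
inductive IsInThick (G : C) : C → Prop
  | gen : IsInThick G G
  | zero (X : C) : IsZero X → IsInThick G X
  | iso {X Y : C} (e : X ≅ Y) : IsInThick G X → IsInThick G Y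
  | shift (n : ℤ) {X : C} : IsInThick G X → IsInThick G ((shiftFunctor C n).obj X)
  | ext {T : Triangle C} (hT : T ∈ distTriang C)
      (h₁ : IsInThick G T.obj₁) (h₃ : IsInThick G T.obj₃) : IsInThick G T.obj₂
  | smd {X Y : C} : IsInThick G (X ⊞ Y) → IsInThick G X

end Complexity



end

private lemma fpow_add {C : Type*} [Category C] (F : C ⥤ C) (a b : ℕ) :
    fpow F (a + b) = fpow F a ⋙ fpow F b := by
  induction b with
  | zero => exact (Functor.comp_id _).symm
  | succ b ih =>
      show fpow F (a + b) ⋙ F = _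
      rw [ih]
      rfl

private lemma fpow_fpow {C : Type*} [Category C] (F : C ⥤ C) (m n : ℕ) :
    fpow (fpow F m) n = fpow F (n * m) := by
  induction n with
  | zero => rw [Nat.zero_mul]; rfl
  | succ n ih =>
      show fpow (fpow F m) n ⋙ fpow F m = _
      rw [ih, ← fpow_add, Nat.succ_mul]

private lemma tendsto_coe_mul_of_tendsto_one {c r : ℕ → ℝ} {p : EReal}
    (hc : Tendsto (fun n => ((c n : ℝ) : EReal)) atTop (𝓝 p))
    (hr : Tendsto r atTop (𝓝 1)) :
    Tendsto (fun n => ((c n * r n : ℝ) : EReal)) atTop (𝓝 p) := by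
  induction p using EReal.rec with
  | bot =>
      have hc' : Tendsto c atTop atBot := by
        rw [EReal.tendsto_nhds_bot_iff_real] at hc
        exact tendsto_atBot.2 fun b =>
          (hc b).mono fun n hn => le_of_lt (by exact_mod_cast hn)
      have hb : Tendsto (fun n => c n * r n) atTop atBot := hc'.atBot_mul_pos one_pos hr
      rw [EReal.tendsto_nhds_bot_iff_real]
      intro x
      filter_upwards [hb.eventually (eventually_lt_atBot x)] with n hn
      exact_mod_cast hn
  | coe x =>
      rw [EReal.tendsto_coe] at hc ⊢
      simpa using hc.mul hr
  | top =>
      have hc' : Tendsto c atTop atTop := by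
        rw [EReal.tendsto_nhds_top_iff_real] at hc
        exact tendsto_atTop.2 fun b =>
          (hc b).mono fun n hn => le_of_lt (by exact_mod_cast hn)
      have hb : Tendsto (fun n => c n * r n) atTop atTop := hc'.atTop_mul_pos one_pos hr
      rw [EReal.tendsto_nhds_top_iff_real]
      intro x
      filter_upwards [hb.eventually (eventually_gt_atTop x)] with n hn
      exact_mod_cast hn

theorem polyEntropy_of_power
    {C : Type*} [Category C] [HasZeroObject C] [Preadditive C]
    [HasShift C ℤ] [∀ n : ℤ, (shiftFunctor C n).Additive] [Pretriangulated C]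
    (G : C) (hG : ∀ X : C, IsInThick G X)
    (F : C ⥤ C) (t L : ℝ)
    (hL : Tendsto (entropySeq F G t) atTop (𝓝 L))
    (p : EReal)
    (hp : Tendsto (fun n : ℕ => ((polySeq F G t L n : ℝ) : EReal)) atTop (𝓝 p))
    (m : ℕ) (hm : 0 < m) :
    Filter.limsup (fun n : ℕ =>
        ((polySeq (fpow F m) G t ((m : ℝ) * L) n : ℝ) : EReal)) atTop = p
    ∧ Tendsto (fun n : ℕ =>
        (((logDelta G ((fpow F (n * m)).obj G) t - (n : ℝ) * ((m : ℝ) * L)) /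
          Real.log (n : ℝ) : ℝ) : EReal)) atTop (𝓝 p) := by
  have hcomp : Tendsto (fun n : ℕ => n * m) atTop atTop :=
    tendsto_atTop_mono (fun n => Nat.le_mul_of_pos_right n hm) tendsto_id
  have hc : Tendsto (fun n : ℕ => ((polySeq F G t L (n * m) : ℝ) : EReal)) atTop (𝓝 p) :=
    hp.comp hcomp
  have hlog : Tendsto (fun n : ℕ => Real.log (n : ℝ)) atTop atTop :=
    Real.tendsto_log_atTop.comp tendsto_natCast_atTop_atTop
  have hr : Tendsto (fun n : ℕ => Real.log ((n * m : ℕ) : ℝ) / Real.log (n : ℝ))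
      atTop (𝓝 1) := by
    have h0 : Tendsto (fun n : ℕ => Real.log (m : ℝ) / Real.log (n : ℝ)) atTop (𝓝 0) :=
      tendsto_const_nhds.div_atTop hlog
    have h1 : Tendsto (fun n : ℕ => 1 + Real.log (m : ℝ) / Real.log (n : ℝ))
        atTop (𝓝 1) := by
      simpa using tendsto_const_nhds.add h0
    refine h1.congr' ?_
    filter_upwards [eventually_ge_atTop 2] with n hn
    have hn0 : (0 : ℝ) < (n : ℝ) := by
      have : (0 : ℕ) < n := by omega
      exact_mod_cast this
    have hm0 : (0 : ℝ) < (m : ℝ) := by exact_mod_cast hm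
    have hlogn : Real.log (n : ℝ) ≠ 0 := by
      have : (1 : ℝ) < (n : ℝ) := by
        have : (1 : ℕ) < n := by omega
        exact_mod_cast this
      exact ne_of_gt (Real.log_pos this)
    rw [Nat.cast_mul, Real.log_mul (ne_of_gt hn0) (ne_of_gt hm0)]
    field_simp
  have hb : Tendsto (fun n : ℕ =>
      (((logDelta G ((fpow F (n * m)).obj G) t - (n : ℝ) * ((m : ℝ) * L)) /
        Real.log (n : ℝ) : ℝ) : EReal)) atTop (𝓝 p) := by
    refine (tendsto_coe_mul_of_tendsto_one hc hr).congr' ?_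
    filter_upwards [eventually_ge_atTop 2] with n hn
    congr 1
    have hnm1 : (1 : ℝ) < ((n * m : ℕ) : ℝ) := by
      have : (1 : ℕ) < n * m := by
        calc 1 < 2 := one_lt_two
        _ ≤ n := hn
        _ ≤ n * m := Nat.le_mul_of_pos_right n hm
      exact_mod_cast this
    have hlognm : Real.log ((n * m : ℕ) : ℝ) ≠ 0 := ne_of_gt (Real.log_pos hnm1)
    have hd : logDelta G ((fpow F (n * m)).obj G) t - ((n * m : ℕ) : ℝ) * L
        = logDelta G ((fpow F (n * m)).obj G) t - (n : ℝ) * ((m : ℝ) * L) := by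
      push_cast; ring
    have hlogn : Real.log (n : ℝ) ≠ 0 := by
      have : (1 : ℝ) < (n : ℝ) := by
        have : (1 : ℕ) < n := by omega
        exact_mod_cast this
      exact ne_of_gt (Real.log_pos this)
    rw [polySeq, hd]
    push_cast at hlognm ⊢
    field_simp
  refine ⟨?_, hb⟩
  have hfun : (fun n : ℕ => ((polySeq (fpow F m) G t ((m : ℝ) * L) n : ℝ) : EReal))
      = fun n : ℕ =>
        (((logDelta G ((fpow F (n * m)).obj G) t - (n : ℝ) * ((m : ℝ) * L)) /
          Real.log (n : ℝ) : ℝ) : EReal) := by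
    funext n
    rw [polySeq, fpow_fpow]
  rw [hfun]
  exact hb.limsup_eq
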